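/- arXiv:1803.07118 — 3 statements merged into one kernel-verified Lean document; each statement's English description precedes it below -/
import Mathlib

section
/- For each prime p and positive integers n, k, any injective map from (F̄ₚ)ⁿ to (F̄ₚ)ⁿ whose coordinates are polynomials of degree at most k is surjective, where F̄ₚ is the algebraic closure of the field with p elements. -/
open MvPolynomial

theorem ax_grothendieck_algebraic_closure_zmod (p : ℕ) [Fact p.Prime]
    (n k : ℕ) (hn : 0 < n) (hk : 0 < k)
    (f : (Fin n → AlgebraicClosure (ZMod p)) → (Fin n → AlgebraicClosure (ZMod p)))
    (ps : Fin n → MvPolynomial (Fin n) (AlgebraicClosure (ZMod p)))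
    (hdeg : ∀ i, (ps i).totalDegree ≤ k)
    (hf : ∀ x i, f x i = eval x (ps i))
    (hinj : Function.Injective f) :
    Function.Surjective f := by
  have hfe : f = fun v i => eval v (ps i) := by funext v i; exact hf v i
  rw [hfe] at hinj ⊢
  exact ax_grothendieck_univ ps hinj
end

section
/- Ax–Grothendieck theorem: every injective polynomial map from ℂⁿ to ℂⁿ is surjective. -/
open MvPolynomial

/-- Ax–Grothendieck: every injective polynomial map `ℂⁿ → ℂⁿ` is surjective. -/
theorem ax_grothendieck_complex (n : ℕ)
    (f : (Fin n → ℂ) → (Fin n → ℂ))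
    (ps : Fin n → MvPolynomial (Fin n) ℂ)
    (hf : ∀ x i, f x i = eval x (ps i))
    (hinj : Function.Injective f) :
    Function.Surjective f := by
  have hfe : f = fun v i => eval v (ps i) := by
    funext x i; exact hf x i
  rw [hfe] at hinj ⊢
  exact ax_grothendieck_univ ps hinj
end

section
/- If G is an infinite graph on vertex set of regular uncountable cardinality κ⁺ with no half-graph of length k for some finite k (i.e., the edge relation is k-stable), then G contains a clique or an independent set of size κ⁺. -/
/-!
Call `v ∈ A` a splitting vertex of a set `A` of size `> κ` if both its neighbours and its
non-neighbours in `A` number `> κ`. If every such `A` has a splitting vertex, splitting twice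
at each step builds half-graphs of every length. Otherwise some `A` of size `κ⁺` has none: then
`κ⁺` of its vertices have `≤ κ` neighbours in `A`, or `κ⁺` of them have `≤ κ` non-neighbours,
and a maximal independent set (of `G`, resp. of `Gᶜ`) among those vertices has size `κ⁺`.
-/

open Cardinal Set

namespace SimpleGraph

variable {V : Type*} (G : SimpleGraph V)

def IsHalfGraph {k : ℕ} (a b : Fin k → V) : Prop :=
  ∀ i j, G.Adj (a i) (b j) ↔ i < j

theorem exists_isHalfGraph_of_forall_exists_split {P : Set V → Prop}
    (hsplit : ∀ A, P A → ∃ v ∈ A, P (A ∩ G.neighborSet v) ∧ P (A \ G.neighborSet v))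
    (k : ℕ) {A : Set V} (hA : P A) :
    ∃ a b : Fin k → V, (∀ i, a i ∈ A) ∧ (∀ j, b j ∈ A) ∧ G.IsHalfGraph a b := by
  induction k generalizing A with
  | zero => exact ⟨Fin.elim0, Fin.elim0, Fin.rec0, Fin.rec0, Fin.rec0⟩
  | succ k ih =>
    -- `v` becomes `b 0`, `u` becomes `a 0`, the other pairs come from `(A \ N(v)) ∩ N(u)`.
    obtain ⟨v, hvA, -, hB⟩ := hsplit A hA
    obtain ⟨u, ⟨huA, hvu⟩, hBu, -⟩ := hsplit _ hB
    obtain ⟨a, b, ha, hb, hab⟩ := ih hBu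
    refine ⟨Fin.cons u a, Fin.cons v b, Fin.cases huA fun i => (ha i).1.1,
      Fin.cases hvA fun j => (hb j).1.1, fun i j => ?_⟩
    cases i using Fin.cases <;> cases j using Fin.cases
    · simpa using fun h => hvu h.symm
    · simpa using (hb _).2
    · simpa using fun h => (ha _).1.2 h.symm
    · simpa using hab _ _

theorem exists_isIndepSet_subset_of_mk_inter_neighborSet_le {κ : Cardinal} (hκ : ℵ₀ ≤ κ)
    {S : Set V} (hS : κ < #S) (hdeg : ∀ v ∈ S, #(S ∩ G.neighborSet v : Set V) ≤ κ) :
    ∃ T ⊆ S, G.IsIndepSet T ∧ κ < #T := by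
  obtain ⟨T, hT⟩ := zorn_subset {T | T ⊆ S ∧ G.IsIndepSet T} fun c hcS hc =>
    ⟨⋃₀ c, ⟨sUnion_subset fun t ht => (hcS ht).1, hc.pairwise_sUnion.2 fun t ht => (hcS ht).2⟩,
      fun _ => subset_sUnion_of_mem⟩
  obtain ⟨hTS, hTind⟩ := hT.prop
  refine ⟨T, hTS, hTind, lt_of_not_ge fun hTκ => hS.not_ge ?_⟩
  have hcover : S ⊆ T ∪ ⋃ t ∈ T, S ∩ G.neighborSet t := by
    intro v hv
    by_contra hvT
    simp only [mem_union, mem_iUnion, mem_inter_iff, mem_neighborSet, not_or, not_exists,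
      not_and] at hvT
    refine hvT.1 (hT.mem_of_prop_insert ⟨insert_subset hv hTS, hTind.insert fun t ht _ => ?_⟩)
    exact ⟨fun h => hvT.2 t ht hv h.symm, hvT.2 t ht hv⟩
  calc #S ≤ #T + #T * ⨆ t : T, #(S ∩ G.neighborSet t : Set V) :=
        (mk_le_mk_of_subset hcover).trans <|
          (mk_union_le _ _).trans (add_le_add le_rfl (mk_biUnion_le _ _))
    _ ≤ κ := add_le_of_le hκ hTκ <|
        (mul_le_mul' hTκ (ciSup_le' fun t : T => hdeg t (hTS t.2))).trans (mul_eq_self hκ).le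

theorem exists_isClique_or_isIndepSet_of_forall_not_split {κ : Cardinal} (hκ : ℵ₀ ≤ κ)
    {A : Set V} (hA : κ < #A)
    (hnosplit : ∀ v ∈ A, κ < #(A ∩ G.neighborSet v : Set V) →
      #(A \ G.neighborSet v : Set V) ≤ κ) :
    ∃ T ⊆ A, κ < #T ∧ (G.IsClique T ∨ G.IsIndepSet T) := by
  set S := {v ∈ A | #(A ∩ G.neighborSet v : Set V) ≤ κ}
  have hSA : S ⊆ A := sep_subset _ _
  have hlarge : κ < #S ∨ κ < #(A \ S : Set V) := by
    by_contra! h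
    refine hA.not_ge ?_
    calc #A = #(S ∪ A \ S : Set V) := by rw [union_sdiff_cancel hSA]
      _ ≤ #S + #(A \ S : Set V) := mk_union_le _ _
      _ ≤ κ := add_le_of_le hκ h.1 h.2
  rcases hlarge with hS | hS
  · obtain ⟨T, hTS, hT, hTκ⟩ := G.exists_isIndepSet_subset_of_mk_inter_neighborSet_le hκ hS
      fun v hv => (mk_le_mk_of_subset (inter_subset_inter_left _ hSA)).trans hv.2
    exact ⟨T, hTS.trans hSA, hTκ, Or.inr hT⟩
  · have hcodeg : ∀ v ∈ A \ S, #((A \ S) ∩ Gᶜ.neighborSet v : Set V) ≤ κ := by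
      intro v hv
      have hv' : κ < #(A ∩ G.neighborSet v : Set V) := lt_of_not_ge fun h => hv.2 ⟨hv.1, h⟩
      refine (mk_le_mk_of_subset fun u hu => ?_).trans (hnosplit v hv.1 hv')
      exact ⟨hu.1.1, ((G.compl_adj v u).1 hu.2).2⟩
    obtain ⟨T, hTS, hT, hTκ⟩ :=
      Gᶜ.exists_isIndepSet_subset_of_mk_inter_neighborSet_le hκ hS hcodeg
    exact ⟨T, hTS.trans sdiff_subset, hTκ, Or.inl (G.isIndepSet_compl.1 hT)⟩

end SimpleGraph

/-- An infinite graph of size `κ⁺` with no half-graph of length `k` contains a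
clique or independent set of size `κ⁺`. -/
theorem stable_infinite_ramsey {V : Type*} {κ : Cardinal} (hκ : ℵ₀ ≤ κ)
    (hV : #V = Order.succ κ) (G : SimpleGraph V) (k : ℕ)
    (hstable : ¬∃ (a b : Fin k → V), ∀ i j : Fin k,
      G.Adj (a i) (b j) ↔ i < j) :
    ∃ S : Set V, #S = Order.succ κ ∧
      (S.Pairwise G.Adj ∨ S.Pairwise fun x y => ¬ G.Adj x y) := by
  by_cases hsplit : ∀ A : Set V, κ < #A →
      ∃ v ∈ A, κ < #(A ∩ G.neighborSet v : Set V) ∧ κ < #(A \ G.neighborSet v : Set V)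
  · have huniv : κ < #(Set.univ : Set V) := by
      rw [mk_univ, hV]
      exact Order.lt_succ κ
    obtain ⟨a, b, -, -, hab⟩ := G.exists_isHalfGraph_of_forall_exists_split hsplit k huniv
    exact absurd ⟨a, b, hab⟩ hstable
  · push Not at hsplit
    obtain ⟨A, hA, hnosplit⟩ := hsplit
    obtain ⟨T, -, hT, hTG⟩ :=
      G.exists_isClique_or_isIndepSet_of_forall_not_split hκ hA hnosplit
    exact ⟨T, le_antisymm (hV ▸ mk_set_le T) (Order.succ_le_of_lt hT), hTG⟩
end
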